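/- arXiv:2512.01154 — 4 statements merged into one kernel-verified Lean document; each statement's English description precedes it below -/
import Mathlib

section
/- Let θ : [0,1] → [0,+∞] be a function such that the one-sided limits θ(x⁻) and θ(x⁺) exist for every x ∈ [0,1], and let ϑ : [0,+∞] → [0,1] be a function such that (θ,ϑ) is an additive generator pair of the overlap function O_{θ,ϑ}(x,y) = ϑ(θ(x)+θ(y)). Let c,m ∈ ℝ with c > 0 and m ≥ 0, let h : [0,1] → [0,1] be a function satisfying θ(h(x)) = c·θ(x) + m for all x ∈ [0,1], and define g : [2m,+∞] → [0,+∞] by g(x) = (x − 2m)/c. Then (θ∘h, ϑ∘g) is also an additive generator pair of O_{θ,ϑ}, i.e., ϑ(g(θ(h(x)) + θ(h(y)))) = O_{θ,ϑ}(x,y) for all x,y ∈ [0,1]. -/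
open Set Filter Topology
open scoped ENNReal

noncomputable section

/-- `O`, viewed as a function on `[0,1]²` with values in `[0,1] ⊆ ℝ`,
is an overlap function: bounded in `[0,1]`, commutative, `O(x,y)=0 ↔ xy=0`,
`O(x,y)=1 ↔ xy=1`, non-decreasing in each variable, and continuous. -/
def IsOverlapFn (O : ℝ → ℝ → ℝ) : Prop :=
  (∀ x ∈ Icc (0:ℝ) 1, ∀ y ∈ Icc (0:ℝ) 1, O x y ∈ Icc (0:ℝ) 1) ∧
  (∀ x ∈ Icc (0:ℝ) 1, ∀ y ∈ Icc (0:ℝ) 1, O x y = O y x) ∧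
  (∀ x ∈ Icc (0:ℝ) 1, ∀ y ∈ Icc (0:ℝ) 1, (O x y = 0 ↔ x * y = 0)) ∧
  (∀ x ∈ Icc (0:ℝ) 1, ∀ y ∈ Icc (0:ℝ) 1, (O x y = 1 ↔ x * y = 1)) ∧
  (∀ y ∈ Icc (0:ℝ) 1, ∀ x₁ ∈ Icc (0:ℝ) 1, ∀ x₂ ∈ Icc (0:ℝ) 1, x₁ ≤ x₂ → O x₁ y ≤ O x₂ y) ∧
  (∀ x ∈ Icc (0:ℝ) 1, ∀ y₁ ∈ Icc (0:ℝ) 1, ∀ y₂ ∈ Icc (0:ℝ) 1, y₁ ≤ y₂ → O x y₁ ≤ O x y₂) ∧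
  ContinuousOn (fun p : ℝ × ℝ => O p.1 p.2) (Icc (0:ℝ) 1 ×ˢ Icc (0:ℝ) 1)

/-- Both one-sided limits `θ(x⁻)` and `θ(x⁺)` (taken within the domain `[0,1]`)
exist for every `x ∈ [0,1]`. -/
def HasOneSidedLimits (θ : ℝ → ℝ≥0∞) : Prop :=
  ∀ x ∈ Icc (0:ℝ) 1,
    (∃ l : ℝ≥0∞, Tendsto θ (𝓝[Icc (0:ℝ) 1 ∩ Iio x] x) (𝓝 l)) ∧
    (∃ l : ℝ≥0∞, Tendsto θ (𝓝[Icc (0:ℝ) 1 ∩ Ioi x] x) (𝓝 l))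

/-- If `(θ,ϑ)` is an additive generator pair of the overlap function `O_{θ,ϑ}`,
`h : [0,1] → [0,1]` satisfies `θ(h(x)) = c·θ(x) + m` (`c>0`, `m≥0`) and
`g : [2m,+∞] → [0,+∞]` is `g(x)=(x-2m)/c`, then `(θ∘h, ϑ∘g)` is also an additive
generator pair of `O_{θ,ϑ}`. -/
theorem stmt_11 (θ : ℝ → ℝ≥0∞) (ϑ : ℝ≥0∞ → ℝ)
    (hθ : HasOneSidedLimits θ)
    (hϑmem : ∀ x : ℝ≥0∞, ϑ x ∈ Icc (0:ℝ) 1)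
    (hO : IsOverlapFn (fun x y => ϑ (θ x + θ y)))
    (c m : ℝ) (hc : 0 < c) (hm : 0 ≤ m)
    (h : ℝ → ℝ) (hmaps : ∀ x ∈ Icc (0:ℝ) 1, h x ∈ Icc (0:ℝ) 1)
    (hh : ∀ x ∈ Icc (0:ℝ) 1, θ (h x) = ENNReal.ofReal c * θ x + ENNReal.ofReal m)
    (g : ℝ≥0∞ → ℝ≥0∞)
    (hg : ∀ x ∈ Ici (ENNReal.ofReal (2 * m)),
      g x = (x - ENNReal.ofReal (2 * m)) / ENNReal.ofReal c) :
    ∀ x ∈ Icc (0:ℝ) 1, ∀ y ∈ Icc (0:ℝ) 1,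
      ϑ (g (θ (h x) + θ (h y))) = ϑ (θ x + θ y) := by
  intro x hx y hy
  have key : θ (h x) + θ (h y)
      = ENNReal.ofReal c * (θ x + θ y) + ENNReal.ofReal (2 * m) := by
    rw [hh x hx, hh y hy, two_mul, ENNReal.ofReal_add hm hm, mul_add]
    ring
  have hmem : θ (h x) + θ (h y) ∈ Ici (ENNReal.ofReal (2 * m)) := by
    simp only [mem_Ici, key]; exact le_add_left le_rfl
  rw [hg _ hmem, key, ENNReal.add_sub_cancel_right ENNReal.ofReal_ne_top,
    mul_comm, mul_div_assoc, ENNReal.div_self (ENNReal.ofReal_pos.mpr hc).ne'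
      ENNReal.ofReal_ne_top, mul_one]
end
end

section
/- Let θ : [0,1] → [0,+∞] be a function such that the one-sided limits θ(x⁻) and θ(x⁺) exist for every x ∈ [0,1], and let ϑ : [0,+∞] → [0,1] be a strictly decreasing function such that (θ,ϑ) is an additive generator pair of the overlap function O_{θ,ϑ}(x,y) = ϑ(θ(x)+θ(y)). Let c,m ∈ ℝ with c > 0 and m ≥ 0, let h : [0,1] → [0,1] be a function satisfying θ(h(x)) = c·θ(x) + m for all x ∈ [0,1], define f : [0,+∞] → [0,+∞] by f(x) = cx + 2m, and define g : [0, ϑ(2m)] → [0,1] by g(x) = ϑ(f⁻¹(ϑ⁻¹(x))). Then (θ∘h, g∘ϑ) is also an additive generator pair of O_{θ,ϑ}, i.e., g(ϑ(θ(h(x)) + θ(h(y)))) = O_{θ,ϑ}(x,y) for all x,y ∈ [0,1]. -/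
open Set Filter Topology
open scoped ENNReal

noncomputable section

/-- If `(θ,ϑ)` is an additive generator pair of the overlap function `O_{θ,ϑ}`
with `ϑ` strictly decreasing, `h : [0,1] → [0,1]` satisfies `θ(h(x)) = c·θ(x) + m`
(`c>0`, `m≥0`), `f(x)=cx+2m` and `g : [0,ϑ(2m)] → [0,1]` is `g(x)=ϑ(f⁻¹(ϑ⁻¹(x)))`,
then `(θ∘h, g∘ϑ)` is also an additive generator pair of `O_{θ,ϑ}`. -/
theorem stmt_12 (θ : ℝ → ℝ≥0∞) (ϑ : ℝ≥0∞ → ℝ)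
    (hθ : HasOneSidedLimits θ)
    (hϑmem : ∀ x : ℝ≥0∞, ϑ x ∈ Icc (0:ℝ) 1)
    (hϑsd : StrictAnti ϑ)
    (hO : IsOverlapFn (fun x y => ϑ (θ x + θ y)))
    (c m : ℝ) (hc : 0 < c) (hm : 0 ≤ m)
    (h : ℝ → ℝ) (hmaps : ∀ x ∈ Icc (0:ℝ) 1, h x ∈ Icc (0:ℝ) 1)
    (hh : ∀ x ∈ Icc (0:ℝ) 1, θ (h x) = ENNReal.ofReal c * θ x + ENNReal.ofReal m)
    (f : ℝ≥0∞ → ℝ≥0∞)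
    (hf : ∀ x : ℝ≥0∞, f x = ENNReal.ofReal c * x + ENNReal.ofReal (2 * m))
    (g : ℝ → ℝ)
    (hg : ∀ x ∈ Icc (0:ℝ) (ϑ (ENNReal.ofReal (2 * m))),
      g x = ϑ (Function.invFun f (Function.invFun ϑ x))) :
    ∀ x ∈ Icc (0:ℝ) 1, ∀ y ∈ Icc (0:ℝ) 1,
      g (ϑ (θ (h x) + θ (h y))) = ϑ (θ x + θ y) := by
  intro x hx y hy
  have hfinj : Function.Injective f := by
    intro a b hab
    rw [hf, hf] at hab
    have h1 : ENNReal.ofReal c * a = ENNReal.ofReal c * b :=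
      (ENNReal.add_left_inj ENNReal.ofReal_ne_top).mp hab
    exact (ENNReal.mul_right_inj (by simpa using hc) ENNReal.ofReal_ne_top).mp h1
  have hft : θ (h x) + θ (h y) = f (θ x + θ y) := by
    rw [hh x hx, hh y hy, hf, two_mul, ENNReal.ofReal_add hm hm, mul_add]
    ring
  have hmem : ϑ (f (θ x + θ y)) ∈ Icc (0:ℝ) (ϑ (ENNReal.ofReal (2 * m))) := by
    refine ⟨(hϑmem _).1, hϑsd.antitone ?_⟩
    rw [hf]; exact le_add_self
  rw [hft, hg _ hmem, Function.leftInverse_invFun hϑsd.injective,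
    Function.leftInverse_invFun hfinj]
end
end

section
/- Define θ : [0,1] → [0,+∞] by θ(x) = −ln x for x ≠ 0 and θ(0) = +∞, ϑ : [0,+∞] → [0,1] by ϑ(x) = e^{−x} for x ∈ [0,+∞) and ϑ(+∞) = 0, and h : [0,+∞] → [0,+∞] by h(x) = x². Then there is no function g : [0,+∞] → [0,+∞] such that ϑ(g(h(θ(x)) + h(θ(y)))) = xy for all x,y ∈ [0,1]; that is, no g makes (h∘θ, ϑ∘g) an additive generator pair of the product overlap function O(x,y) = xy. -/
open Set Filter Topology
open scoped ENNReal

noncomputable section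

/-- `θ(x) = -ln x` for `x ≠ 0`, `θ(0) = +∞`. -/
def exθ : ℝ → ℝ≥0∞ := fun x => if x = 0 then ⊤ else ENNReal.ofReal (-Real.log x)

/-- `ϑ(x) = e^{-x}` for `x ∈ [0,+∞)`, `ϑ(+∞) = 0`. -/
def exϑ : ℝ≥0∞ → ℝ := fun x => if x = ⊤ then 0 else Real.exp (-x.toReal)

lemma exθ_exp_neg (a : ℝ) (ha : 0 ≤ a) : exθ (Real.exp (-a)) = ENNReal.ofReal a := by
  have hne : Real.exp (-a) ≠ 0 := (Real.exp_pos _).ne'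
  simp [exθ, hne, Real.log_exp]

lemma mem_Icc_exp_neg (a : ℝ) (ha : 0 ≤ a) : Real.exp (-a) ∈ Icc (0:ℝ) 1 :=
  ⟨(Real.exp_pos _).le, Real.exp_le_one_iff.mpr (by linarith)⟩

/-- With `θ(x) = -ln x`, `ϑ(x) = e^{-x}` and `h(x) = x²` on `[0,+∞]`, there is no
function `g` such that `(h∘θ, ϑ∘g)` is an additive generator pair of the product
overlap function `O(x,y) = xy`. -/
theorem stmt_15 :
    ¬ ∃ g : ℝ≥0∞ → ℝ≥0∞, ∀ x ∈ Icc (0:ℝ) 1, ∀ y ∈ Icc (0:ℝ) 1,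
        exϑ (g ((exθ x) ^ 2 + (exθ y) ^ 2)) = x * y := by
  rintro ⟨g, hg⟩
  have hs2 : (0:ℝ) ≤ Real.sqrt 2 := Real.sqrt_nonneg 2
  have h1 := hg _ (mem_Icc_exp_neg 1 zero_le_one) _ (mem_Icc_exp_neg 1 zero_le_one)
  have h2 := hg _ (mem_Icc_exp_neg (Real.sqrt 2) hs2) 1 ⟨zero_le_one, le_refl 1⟩
  rw [exθ_exp_neg 1 zero_le_one] at h1
  rw [exθ_exp_neg (Real.sqrt 2) hs2] at h2
  have hθ1 : exθ 1 = 0 := by simp [exθ]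
  rw [hθ1] at h2
  have e1 : (ENNReal.ofReal 1) ^ 2 + (ENNReal.ofReal 1) ^ 2 = (2 : ℝ≥0∞) := by
    rw [ENNReal.ofReal_one]; norm_num
  have e2 : (ENNReal.ofReal (Real.sqrt 2)) ^ 2 + (0:ℝ≥0∞) ^ 2 = (2 : ℝ≥0∞) := by
    rw [← ENNReal.ofReal_pow hs2, Real.sq_sqrt (by norm_num : (0:ℝ) ≤ 2)]
    norm_num [ENNReal.ofReal_ofNat]
  rw [e1] at h1
  rw [e2] at h2
  have : Real.exp (-1) * Real.exp (-1) = Real.exp (-Real.sqrt 2) * 1 := by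
    rw [← h1, ← h2]
  rw [mul_one, ← Real.exp_add] at this
  have h3 := Real.exp_injective this
  have h4 : Real.sqrt 2 = 2 := by linarith
  have := Real.sq_sqrt (by norm_num : (0:ℝ) ≤ 2)
  rw [h4] at this
  norm_num at this
end
end

section
/- Define θ : [0,1] → [0,+∞] by θ(x) = −ln x for x ≠ 0 and θ(0) = +∞, ϑ : [0,+∞] → [0,1] by ϑ(x) = e^{−x} for x ∈ [0,+∞) and ϑ(+∞) = 0, and h : [0,1] → [0,1] by h(x) = (x² + x)/2. Then there is no function g : [0,+∞] → [0,+∞] such that ϑ(g(θ(h(x)) + θ(h(y)))) = xy for all x,y ∈ [0,1]; that is, no g makes (θ∘h, ϑ∘g) an additive generator pair of the product overlap function O(x,y) = xy. -/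
open Set Filter Topology
open scoped ENNReal

noncomputable section

lemma exθ_add_eq (a b : ℝ) (ha : 0 < a) (hb : 0 < b) (ha1 : a ≤ 1) (hb1 : b ≤ 1) :
    exθ a + exθ b = ENNReal.ofReal (-Real.log (a * b)) := by
  simp only [exθ, if_neg ha.ne', if_neg hb.ne']
  rw [Real.log_mul ha.ne' hb.ne', neg_add,
    ← ENNReal.ofReal_add (by simpa using Real.log_nonpos ha.le ha1)
      (by simpa using Real.log_nonpos hb.le hb1)]

/-- With `θ(x) = -ln x`, `ϑ(x) = e^{-x}` and `h(x) = (x² + x)/2` on `[0,1]`, there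
is no function `g` such that `(θ∘h, ϑ∘g)` is an additive generator pair of the
product overlap function `O(x,y) = xy`. -/
theorem stmt_16 :
    ¬ ∃ g : ℝ≥0∞ → ℝ≥0∞, ∀ x ∈ Icc (0:ℝ) 1, ∀ y ∈ Icc (0:ℝ) 1,
        exϑ (g (exθ ((x ^ 2 + x) / 2) + exθ ((y ^ 2 + y) / 2))) = x * y := by
  rintro ⟨g, hg⟩
  have e1 := hg (3/8) (by norm_num) (5/9) (by norm_num)
  have e2 := hg (7/8) (by norm_num) (2/9) (by norm_num)
  have h1 : ((3/8:ℝ) ^ 2 + 3/8) / 2 = 33/128 := by norm_num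
  have h2 : ((5/9:ℝ) ^ 2 + 5/9) / 2 = 35/81 := by norm_num
  have h3 : ((7/8:ℝ) ^ 2 + 7/8) / 2 = 105/128 := by norm_num
  have h4 : ((2/9:ℝ) ^ 2 + 2/9) / 2 = 11/81 := by norm_num
  rw [h1, h2, exθ_add_eq _ _ (by norm_num) (by norm_num) (by norm_num) (by norm_num)] at e1
  rw [h3, h4, exθ_add_eq _ _ (by norm_num) (by norm_num) (by norm_num) (by norm_num)] at e2
  have hprod : (33/128 : ℝ) * (35/81) = (105/128) * (11/81) := by norm_num
  rw [hprod] at e1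
  rw [e2] at e1
  norm_num at e1
end
end
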